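/- arXiv:2407.04354 — 3 statements merged into one kernel-verified Lean document; each statement's English description precedes it below -/
import Mathlib

section
/- Let r_0 < 0 and r_1,...,r_N ≥ 0 be pairwise distinct rebates, and for q ∈ ℝ_+^N set W = β·q > 0. Then γ > 0 satisfies γ r_i - W/(μ β_i v) ≥ max_{j ≠ i, j ∈ [N] ∪ {0}} (γ r_j - W 1_{j≠0}/(μ β_j v)) if and only if a_i⁻ W ≤ γ ≤ a_i⁺ W, where a_i⁺ = min_{j: r_j > r_i} (1/(μ β_j v) - 1/(μ β_i v))/(r_j - r_i) and a_i⁻ = max_{j ∈ [N]∪{0}: r_j < r_i} (1/(μ β_i v) - 1_{j≠0}/(μ β_j v))/(r_i - r_j). -/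
open Set

/-- Characterization of the set of types `γ` preferring venue `i`: with rebates
`r 0 < 0` for market orders and distinct rebates `r j ≥ 0` for the venues,
`γ > 0` maximizes the rebate-delay tradeoff at venue `i` iff
`a_i⁻ W ≤ γ ≤ a_i⁺ W`, where `a_i⁺` and `a_i⁻` are the constants of eq. (2.13). -/
theorem types_preferring_venue_iff (N : ℕ) (r : Fin N → ℝ) (r0 : ℝ)
    (hr0 : r0 < 0) (hr : ∀ j, 0 ≤ r j)
    (hdist : ∀ j k, j ≠ k → r j ≠ r k)
    (μ v : ℝ) (hμ : 0 < μ) (hv : 0 < v)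
    (β : Fin N → ℝ) (hβ : ∀ j, 0 < β j)
    (W : ℝ) (hW : 0 < W) (i : Fin N)
    (hplus : ∃ j, r i < r j)
    (aplus aminus : ℝ)
    (haplus : aplus = sInf {x : ℝ | ∃ j, r i < r j ∧
        x = (1 / (μ * β j * v) - 1 / (μ * β i * v)) / (r j - r i)})
    (haminus : aminus = sSup (insert ((1 / (μ * β i * v)) / (r i - r0))
        {x : ℝ | ∃ j, r j < r i ∧
          x = (1 / (μ * β i * v) - 1 / (μ * β j * v)) / (r i - r j)}))
    (γ : ℝ) (hγ : 0 < γ) :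
    ((∀ j, j ≠ i → γ * r j - W / (μ * β j * v) ≤ γ * r i - W / (μ * β i * v)) ∧
        γ * r0 ≤ γ * r i - W / (μ * β i * v)) ↔
      (aminus * W ≤ γ ∧ γ ≤ aplus * W) := by
  have hX : ∀ j : Fin N, (0:ℝ) < μ * β j * v := fun j => by
    have := hβ j; positivity
  have hstep : ∀ j : Fin N, W / (μ * β j * v) = 1 / (μ * β j * v) * W :=
    fun j => (one_div_mul_eq_div _ _).symm
  -- the sets
  set Sp : Set ℝ := {x : ℝ | ∃ j, r i < r j ∧
      x = (1 / (μ * β j * v) - 1 / (μ * β i * v)) / (r j - r i)} with hSpdef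
  set Sm : Set ℝ := insert ((1 / (μ * β i * v)) / (r i - r0))
      {x : ℝ | ∃ j, r j < r i ∧
        x = (1 / (μ * β i * v) - 1 / (μ * β j * v)) / (r i - r j)} with hSmdef
  have hSpfin : Sp.Finite := by
    apply (Set.finite_range (fun j : Fin N =>
      (1 / (μ * β j * v) - 1 / (μ * β i * v)) / (r j - r i))).subset
    rintro x ⟨j, _, rfl⟩; exact ⟨j, rfl⟩
  have hSmfin : Sm.Finite := by
    apply Set.Finite.insert
    apply (Set.finite_range (fun j : Fin N =>
      (1 / (μ * β i * v) - 1 / (μ * β j * v)) / (r i - r j))).subset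
    rintro x ⟨j, _, rfl⟩; exact ⟨j, rfl⟩
  have hSpne : Sp.Nonempty := by
    obtain ⟨j, hj⟩ := hplus
    exact ⟨_, ⟨j, hj, rfl⟩⟩
  have hSmne : Sm.Nonempty := ⟨_, Set.mem_insert _ _⟩
  -- elementwise equivalences
  have key_p : ∀ j : Fin N, r i < r j →
      ((γ * r j - W / (μ * β j * v) ≤ γ * r i - W / (μ * β i * v)) ↔
        γ ≤ (1 / (μ * β j * v) - 1 / (μ * β i * v)) / (r j - r i) * W) := by
    intro j hj
    rw [div_mul_eq_mul_div (1 / (μ * β j * v) - 1 / (μ * β i * v)) (r j - r i) W,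
      le_div_iff₀ (sub_pos.mpr hj), hstep j, hstep i]
    constructor <;> intro h <;> nlinarith
  have key_m : ∀ j : Fin N, r j < r i →
      ((γ * r j - W / (μ * β j * v) ≤ γ * r i - W / (μ * β i * v)) ↔
        (1 / (μ * β i * v) - 1 / (μ * β j * v)) / (r i - r j) * W ≤ γ) := by
    intro j hj
    rw [div_mul_eq_mul_div (1 / (μ * β i * v) - 1 / (μ * β j * v)) (r i - r j) W,
      div_le_iff₀ (sub_pos.mpr hj), hstep j, hstep i]
    constructor <;> intro h <;> nlinarith
  have key_0 : (γ * r0 ≤ γ * r i - W / (μ * β i * v)) ↔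
      (1 / (μ * β i * v)) / (r i - r0) * W ≤ γ := by
    have h0 : (0:ℝ) < r i - r0 := by linarith [hr i]
    rw [div_mul_eq_mul_div (1 / (μ * β i * v)) (r i - r0) W, div_le_iff₀ h0, hstep i]
    constructor <;> intro h <;> nlinarith
  -- main rewriting of LHS
  have hL : ((∀ j, j ≠ i → γ * r j - W / (μ * β j * v) ≤ γ * r i - W / (μ * β i * v)) ∧
        γ * r0 ≤ γ * r i - W / (μ * β i * v)) ↔
      ((∀ x ∈ Sm, x * W ≤ γ) ∧ (∀ x ∈ Sp, γ ≤ x * W)) := by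
    constructor
    · rintro ⟨h1, h2⟩
      refine ⟨?_, ?_⟩
      · rintro x (rfl | ⟨j, hj, rfl⟩)
        · exact key_0.mp h2
        · have hne : j ≠ i := fun h => absurd h (by rintro rfl; exact lt_irrefl _ hj)
          exact (key_m j hj).mp (h1 j hne)
      · rintro x ⟨j, hj, rfl⟩
        have hne : j ≠ i := fun h => absurd h (by rintro rfl; exact lt_irrefl _ hj)
        exact (key_p j hj).mp (h1 j hne)
    · rintro ⟨hm, hp⟩
      refine ⟨?_, key_0.mpr (hm _ (Set.mem_insert _ _))⟩
      intro j hj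
      rcases lt_trichotomy (r j) (r i) with h | h | h
      · exact (key_m j h).mpr (hm _ (Set.mem_insert_of_mem _ ⟨j, h, rfl⟩))
      · exact absurd h (hdist j i hj)
      · exact (key_p j h).mpr (hp _ ⟨j, h, rfl⟩)
  rw [hL, haplus, haminus]
  have hplusiff : γ ≤ sInf Sp * W ↔ ∀ x ∈ Sp, γ ≤ x * W := by
    rw [← div_le_iff₀ hW, le_csInf_iff hSpfin.bddBelow hSpne]
    exact forall₂_congr fun x _ => (div_le_iff₀ hW)
  have hminusiff : sSup Sm * W ≤ γ ↔ ∀ x ∈ Sm, x * W ≤ γ := by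
    rw [← le_div_iff₀ hW, csSup_le_iff hSmfin.bddAbove hSmne]
    exact forall₂_congr fun x _ => (le_div_iff₀ hW)
  rw [hplusiff, hminusiff]
end

section
/- Let J = A - (μ/W) B - ν I where A = x y^T is a rank-one N×N real matrix with x = β (β_i > 0), y_i = Λ χ'_i + (μ/W^2) β_i Q_i, B = diag(β_1,...,β_N), W = Σ_i β_i Q_i > 0, Q_i ≥ 0, μ, Λ > 0, and χ'_i < 0 for all i. Then for every ν ≥ 0, det(J) = (-1)^{N-1} (∏_i (β_i μ/W + ν)) (Σ_i (β_i^2 Q_i μ/W^2 + Λ β_i χ'_i)/(β_i μ/W + ν) - 1) ≠ 0. -/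
/-!
By the matrix determinant lemma, `det (x yᵀ - D) = (-1)^N (∏ dᵢ) (1 - ∑ xᵢ yᵢ / dᵢ)` for an invertible
diagonal `D`. Here `dᵢ = βᵢ μ / W + ν ≥ βᵢ μ / W`, so the `Q`-part of the sum is at most
`∑ βᵢ Qᵢ / W = 1`, while the `χ'`-part is strictly negative; hence the bracket never vanishes.
-/

open Matrix Finset

theorem Matrix.det_vecMulVec_sub_diagonal {ι K : Type*} [Fintype ι] [DecidableEq ι] [Field K]
    (u v d : ι → K) (hd : ∀ i, d i ≠ 0) :
    (vecMulVec u v - diagonal d).det = (∏ i, -d i) * (1 - ∑ i, u i * v i / d i) := by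
  have hA : IsUnit (diagonal fun i => -d i).det := by
    simpa [det_diagonal, Finset.prod_ne_zero_iff] using hd
  have hinv : (diagonal fun i => -d i)⁻¹ = diagonal fun i => (-d i)⁻¹ :=
    inv_eq_left_inv <| by simp [diagonal_mul_diagonal, hd]
  rw [sub_eq_neg_add, diagonal_neg, vecMulVec_eq Unit,
    det_add_replicateCol_mul_replicateRow hA, det_diagonal, hinv, det_unique]
  congr 1
  simp [Matrix.mul_apply, diagonal_apply, div_eq_mul_inv, sub_eq_add_neg, mul_comm, mul_assoc]

theorem Matrix.det_vecMulVec_sub_diagonal_of_nonempty {ι K : Type*} [Fintype ι] [DecidableEq ι]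
    [Nonempty ι] [Field K] (u v d : ι → K) (hd : ∀ i, d i ≠ 0) :
    (vecMulVec u v - diagonal d).det =
      (-1) ^ (Fintype.card ι - 1) * (∏ i, d i) * ((∑ i, u i * v i / d i) - 1) := by
  have hsign : (-1 : K) ^ Fintype.card ι = -(-1) ^ (Fintype.card ι - 1) := by
    rw [← Nat.sub_add_cancel Fintype.card_pos, pow_succ, Nat.add_sub_cancel, mul_neg_one]
  rw [det_vecMulVec_sub_diagonal u v d hd, prod_neg, card_univ, hsign]
  ring

theorem mul_div_add_le {K : Type*} [Field K] [LinearOrder K] [IsStrictOrderedRing K]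
    {a b c : K} (ha : 0 < a) (hb : 0 ≤ b) (hc : 0 ≤ c) : a * b / (a + c) ≤ b := by
  rw [div_le_iff₀ (by positivity)]
  nlinarith

theorem fluid_bracket_lt_one {ι : Type*} [Fintype ι] [Nonempty ι]
    (β Q χ' : ι → ℝ) (μ Λ W ν : ℝ)
    (hβ : ∀ i, 0 < β i) (hQ : ∀ i, 0 ≤ Q i) (hχ' : ∀ i, χ' i < 0)
    (hμ : 0 < μ) (hΛ : 0 < Λ) (hν : 0 ≤ ν)
    (hW : W = ∑ i, β i * Q i) (hWpos : 0 < W) :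
    ∑ i, (β i ^ 2 * Q i * μ / W ^ 2 + Λ * β i * χ' i) / (β i * μ / W + ν) < 1 := by
  have hrate : ∀ i, 0 < β i * μ / W := fun i => by have := hβ i; positivity
  have hQpart : ∑ i, β i ^ 2 * Q i * μ / W ^ 2 / (β i * μ / W + ν) ≤ 1 :=
    calc ∑ i, β i ^ 2 * Q i * μ / W ^ 2 / (β i * μ / W + ν)
        = ∑ i, β i * μ / W * (β i * Q i / W) / (β i * μ / W + ν) := by
          congr! 2 with i; ring
      _ ≤ ∑ i, β i * Q i / W := sum_le_sum fun i _ =>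
          mul_div_add_le (hrate i) (div_nonneg (mul_nonneg (hβ i).le (hQ i)) hWpos.le) hν
      _ = 1 := by rw [← sum_div, ← hW, div_self hWpos.ne']
  have hχpart : ∑ i, Λ * β i * χ' i / (β i * μ / W + ν) < 0 :=
    sum_neg (fun i _ => div_neg_of_neg_of_pos
      (mul_neg_of_pos_of_neg (mul_pos hΛ (hβ i)) (hχ' i)) (by linarith [hrate i])) univ_nonempty
  simp only [add_div, sum_add_distrib]
  linarith

/-- Determinant of the shifted fluid Jacobian `J - ν I = x yᵀ - (μ/W) B - ν I`:
it equals the explicit product formula and is nonzero for every `ν ≥ 0`. -/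
theorem fluid_jacobian_det_ne_zero (N : ℕ) (hN : 1 ≤ N)
    (β Q χ' : Fin N → ℝ) (μ Λ W ν : ℝ)
    (hβ : ∀ i, 0 < β i) (hQ : ∀ i, 0 ≤ Q i) (hχ' : ∀ i, χ' i < 0)
    (hμ : 0 < μ) (hΛ : 0 < Λ) (hν : 0 ≤ ν)
    (hW : W = ∑ i, β i * Q i) (hWpos : 0 < W) :
    (Matrix.vecMulVec β (fun i => Λ * χ' i + (μ / W ^ 2) * β i * Q i) -
        Matrix.diagonal (fun i => β i * μ / W + ν)).det =
      (-1 : ℝ) ^ (N - 1) * (∏ i, (β i * μ / W + ν)) *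
        ((∑ i, (β i ^ 2 * Q i * μ / W ^ 2 + Λ * β i * χ' i) / (β i * μ / W + ν)) - 1) ∧
    (Matrix.vecMulVec β (fun i => Λ * χ' i + (μ / W ^ 2) * β i * Q i) -
        Matrix.diagonal (fun i => β i * μ / W + ν)).det ≠ 0 := by
  have : Nonempty (Fin N) := ⟨⟨0, hN⟩⟩
  have hd : ∀ i, 0 < β i * μ / W + ν := fun i => by have := hβ i; positivity
  have hnum : ∀ i, β i * (Λ * χ' i + μ / W ^ 2 * β i * Q i) =
      β i ^ 2 * Q i * μ / W ^ 2 + Λ * β i * χ' i := fun i => by ring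
  have hbracket := fluid_bracket_lt_one β Q χ' μ Λ W ν hβ hQ hχ' hμ hΛ hν hW hWpos
  rw [det_vecMulVec_sub_diagonal_of_nonempty _ _ _ fun i => (hd i).ne', Fintype.card_fin]
  simp only [hnum, true_and]
  exact mul_ne_zero (mul_ne_zero (pow_ne_zero _ (by norm_num))
    (prod_ne_zero_iff.mpr fun i _ => (hd i).ne')) (by linarith)
end

section
/- Let A = x y^T - D where D = diag(d_1,...,d_N) with all d_i > 0, x_i > 0 for all i, and y ∈ ℝ^N such that Σ_i x_i y_i / (d_i + ν) < 1 for all ν ≥ 0. Then every real eigenvalue of A is strictly negative. -/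
open Matrix Finset

section SecularEquation

variable {ι K : Type*} [Fintype ι] [DecidableEq ι] [Field K]

theorem vecMulVec_sub_diagonal_mulVec_apply (x y d v : ι → K) (i : ι) :
    ((vecMulVec x y - diagonal d) *ᵥ v) i = x i * (y ⬝ᵥ v) - d i * v i := by
  rw [sub_mulVec, Pi.sub_apply, mulVec_diagonal, vecMulVec_mulVec]
  simp

theorem eigenvector_vecMulVec_sub_diagonal_apply {x y d v : ι → K} {ν : K}
    (hv : (vecMulVec x y - diagonal d) *ᵥ v = ν • v) {i : ι} (hi : d i + ν ≠ 0) :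
    v i = x i * (y ⬝ᵥ v) / (d i + ν) := by
  have h := congrFun hv i
  rw [vecMulVec_sub_diagonal_mulVec_apply, Pi.smul_apply, smul_eq_mul] at h
  rw [eq_div_iff hi]
  linear_combination -h

/-- The secular equation of a rank-one update of a diagonal matrix: pair
`v = (y ⬝ᵥ v) (diag d + ν)⁻¹ x` with `y` and cancel `y ⬝ᵥ v`, which is nonzero as `v ≠ 0`. -/
theorem sum_div_eq_one_of_eigenvector_vecMulVec_sub_diagonal {x y d v : ι → K} {ν : K}
    (hv : (vecMulVec x y - diagonal d) *ᵥ v = ν • v) (hv0 : v ≠ 0)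
    (hd : ∀ i, d i + ν ≠ 0) : ∑ i, x i * y i / (d i + ν) = 1 := by
  have hv_eq i := eigenvector_vecMulVec_sub_diagonal_apply hv (hd i)
  have hc : y ⬝ᵥ v ≠ 0 := by
    intro hc
    exact hv0 (funext fun i => by simp [hv_eq i, hc])
  apply mul_left_cancel₀ hc
  calc (y ⬝ᵥ v) * ∑ i, x i * y i / (d i + ν)
      = ∑ i, y i * (x i * (y ⬝ᵥ v) / (d i + ν)) := by
        rw [mul_sum]
        exact sum_congr rfl fun i _ => by ring
    _ = (y ⬝ᵥ v) * 1 := by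
        rw [mul_one]
        exact sum_congr rfl fun i _ => by rw [← hv_eq i]

end SecularEquation

theorem rank_one_update_eigenvalues_neg_general (N : ℕ)
    (x y d : Fin N → ℝ) (hd : ∀ i, 0 < d i)
    (hsum : ∀ ν ≥ (0 : ℝ), ∑ i, x i * y i / (d i + ν) < 1) :
    ∀ ν : ℝ, (∃ v : Fin N → ℝ, v ≠ 0 ∧
        (Matrix.vecMulVec x y - Matrix.diagonal d).mulVec v = ν • v) →
      ν < 0 := by
  rintro ν ⟨v, hv0, hv⟩
  by_contra! hν
  have hpoles i : d i + ν ≠ 0 := by linarith [hd i]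
  have hsecular := sum_div_eq_one_of_eigenvector_vecMulVec_sub_diagonal hv hv0 hpoles
  linarith [hsum ν hν]

/-- If `A = x yᵀ - D` with `D = diag(d)`, `d i > 0`, `x i > 0`, and
`∑ i, x i y i / (d i + ν) < 1` for all `ν ≥ 0`, then every real eigenvalue of `A`
is strictly negative. -/
theorem rank_one_update_eigenvalues_neg (N : ℕ)
    (x y d : Fin N → ℝ) (hd : ∀ i, 0 < d i) (hx : ∀ i, 0 < x i)
    (hsum : ∀ ν ≥ (0 : ℝ), ∑ i, x i * y i / (d i + ν) < 1) :
    ∀ ν : ℝ, (∃ v : Fin N → ℝ, v ≠ 0 ∧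
        (Matrix.vecMulVec x y - Matrix.diagonal d).mulVec v = ν • v) →
      ν < 0 :=
  rank_one_update_eigenvalues_neg_general N x y d hd hsum
end
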